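/- Let A be a GNF*-algebra. There is a bijection between modular splittings (α, ω) of A and pairs (w, λ) ∈ A₁ × A₁* satisfying (Id_{A₀} ⊗ λ) ∘ δ_{0,1}(w) = 1, where 1 = ε(1). Given (w, λ), the splitting is ω_i(x) = μ_{i,1}(x ⊗ w) and α_i(x) = (Id_{A_{i−1}} ⊗ λ) ∘ δ_{i−1,1}(x); conversely, given (α, ω), one recovers w = ω₀(1) and λ = τ ∘ α₁. -/
import Mathlib


open scoped TensorProduct

structure GNFData (F : Type) [Field F] where
  A : ℕ → Type
  [instAdd : ∀ i, AddCommGroup (A i)]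
  [instMod : ∀ i, Module F (A i)]
  mul : ∀ i j, A i →ₗ[F] A j →ₗ[F] A (i + j)
  comul : ∀ i j, A (i + j) →ₗ[F] A i ⊗[F] A j
  unit : F →ₗ[F] A 0
  counit : A 0 →ₗ[F] F
  star : ∀ i, A i →ₗ[F] A i

attribute [instance] GNFData.instAdd GNFData.instMod

variable {F : Type} [Field F]

/-- Cast between graded pieces along an equality of indices. -/
def GNFData.cast (G : GNFData F) {m n : ℕ} (h : m = n) : G.A m →ₗ[F] G.A n := by
  subst h; exact LinearMap.id

/-- The product as a linear map on the tensor product. -/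
noncomputable def GNFData.mulMap (G : GNFData F) (i j : ℕ) :
    G.A i ⊗[F] G.A j →ₗ[F] G.A (i + j) :=
  TensorProduct.lift (G.mul i j)

/-- The axioms of a graded involutive nearly Frobenius algebra (GNF*-algebra). -/
structure IsGNF (G : GNFData F) : Prop where
  finite : ∀ i, FiniteDimensional F (G.A i)
  assoc : ∀ i j k (x : G.A i) (y : G.A j) (z : G.A k),
    G.mul i (j + k) x (G.mul j k y z)
      = G.cast (Nat.add_assoc i j k) (G.mul (i + j) k (G.mul i j x y) z)
  left_unit : ∀ j (x : G.A j),
    G.mul 0 j (G.unit 1) x = G.cast (Nat.zero_add j).symm x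
  coassoc : ∀ i j k (x : G.A (i + (j + k))),
    (TensorProduct.assoc F (G.A i) (G.A j) (G.A k)).symm
        (LinearMap.lTensor (G.A i) (G.comul j k) (G.comul i (j + k) x))
      = LinearMap.rTensor (G.A k) (G.comul i j)
          (G.comul (i + j) k (G.cast (Nat.add_assoc i j k).symm x))
  left_counit : ∀ j (x : G.A j),
    (TensorProduct.lid F (G.A j))
        (LinearMap.rTensor (G.A j) G.counit
          (G.comul 0 j (G.cast (Nat.zero_add j).symm x))) = x
  frobenius : ∀ i j k (x : G.A i) (y : G.A (j + k)),
    G.comul (i + j) k (G.cast (Nat.add_assoc i j k).symm (G.mul i (j + k) x y))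
      = LinearMap.rTensor (G.A k) (G.mulMap i j)
          ((TensorProduct.assoc F (G.A i) (G.A j) (G.A k)).symm
            (x ⊗ₜ[F] G.comul j k y))
  star_invol : ∀ i (x : G.A i), G.star i (G.star i x) = x
  star_zero : ∀ x : G.A 0, G.star 0 x = x
  star_one : ∀ x : G.A 1, G.star 1 x = x
  star_mul : ∀ i j (x : G.A i) (y : G.A j),
    G.star (i + j) (G.mul i j x y)
      = G.cast (Nat.add_comm j i) (G.mul j i (G.star j y) (G.star i x))
  star_comul : ∀ i j (x : G.A (i + j)),
    G.comul j i (G.cast (Nat.add_comm i j) (G.star (i + j) x))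
      = (TensorProduct.comm F (G.A i) (G.A j))
          (TensorProduct.map (G.star i) (G.star j) (G.comul i j x))

/-- A modular splitting of a GNF*-algebra: degree `+1` and `−1` endomorphisms that are
left module and comodule homomorphisms with `α ∘ ω = Id`. -/
structure ModularSplitting (G : GNFData F) where
  omega : ∀ i, G.A i →ₗ[F] G.A (i + 1)
  alpha : ∀ i, G.A (i + 1) →ₗ[F] G.A i
  omega_module : ∀ i j (x : G.A i) (y : G.A j),
    omega (i + j) (G.mul i j x y) = G.mul i (j + 1) x (omega j y)
  alpha_module : ∀ i j (x : G.A i) (y : G.A (j + 1)),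
    alpha (i + j) (G.mul i (j + 1) x y) = G.mul i j x (alpha j y)
  omega_comodule : ∀ i j (x : G.A (i + j)),
    G.comul i (j + 1) (omega (i + j) x)
      = LinearMap.lTensor (G.A i) (omega j) (G.comul i j x)
  alpha_comodule : ∀ i j (x : G.A (i + j + 1)),
    G.comul i j (alpha (i + j) x)
      = LinearMap.lTensor (G.A i) (alpha j) (G.comul i (j + 1) x)
  alpha_omega : ∀ i (x : G.A i), alpha i (omega i x) = x

namespace GNFData
variable {F : Type} [Field F] (G : GNFData F)

theorem cast_id {n : ℕ} (h : n = n) : G.cast h = LinearMap.id := rfl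

theorem cast_cast {m n k : ℕ} (h1 : m = n) (h2 : n = k) (x : G.A m) :
    G.cast h2 (G.cast h1 x) = G.cast (h1.trans h2) x := by subst h1; subst h2; rfl

theorem star_cast {m n : ℕ} (h : m = n) (x : G.A m) :
    G.star n (G.cast h x) = G.cast h (G.star m x) := by subst h; rfl

theorem comul_cast {m m' n n' : ℕ} (hm : m = m') (hn : n = n') (h : m + n = m' + n')
    (x : G.A (m + n)) :
    G.comul m' n' (G.cast h x)
      = TensorProduct.map (G.cast hm) (G.cast hn) (G.comul m n x) := by
  subst hm; subst hn
  simp only [cast_id, TensorProduct.map_id, LinearMap.id_coe, id_eq]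

theorem mul_cast {m m' n n' : ℕ} (hm : m = m') (hn : n = n') (h : m + n = m' + n')
    (x : G.A m) (y : G.A n) :
    G.mul m' n' (G.cast hm x) (G.cast hn y) = G.cast h (G.mul m n x y) := by
  subst hm; subst hn; rfl

end GNFData
namespace GNFData
variable {F : Type} [Field F] (G : GNFData F)

theorem mul_cast_right {m n n' : ℕ} (hn : n = n') (h : m + n = m + n')
    (x : G.A m) (y : G.A n) :
    G.mul m n' x (G.cast hn y) = G.cast h (G.mul m n x y) := by
  subst hn; rfl

end GNFData
namespace IsGNF
open TensorProduct LinearMap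
variable {F : Type} [Field F] {G : GNFData F} (hG : IsGNF G)
include hG

theorem right_unit (i : ℕ) (x : G.A i) : G.mul i 0 x (G.unit 1) = x := by
  have h := hG.star_mul i 0 x (G.unit 1)
  rw [hG.star_zero, hG.left_unit, G.cast_cast] at h
  have h2 : G.mul i 0 x (G.unit 1)
      = G.star i (G.star (i + 0) (G.mul i 0 x (G.unit 1))) := (hG.star_invol i _).symm
  rw [h, G.cast_id] at h2
  exact h2.trans (hG.star_invol i x)

end IsGNF

namespace IsGNF
open TensorProduct LinearMap
variable {F : Type} [Field F] {G : GNFData F} (hG : IsGNF G)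
include hG

theorem right_counit (i : ℕ) (y : G.A i) :
    TensorProduct.rid F (G.A i) (LinearMap.lTensor (G.A i) G.counit (G.comul i 0 y)) = y := by
  set x : G.A (0 + i) := G.cast (Nat.zero_add i).symm (G.star i y) with hx
  have hsc := hG.star_comul 0 i x
  rw [hx, G.star_cast, G.cast_cast, G.cast_id] at hsc
  have hsc' : G.comul i 0 y
      = (TensorProduct.comm F (G.A 0) (G.A i)) (TensorProduct.map (G.star 0) (G.star i) (G.comul 0 i x)) := by
    rw [← hsc]
    exact congrArg _ (hG.star_invol i y).symm
  have key : ∀ t : G.A 0 ⊗[F] G.A i,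
      TensorProduct.rid F (G.A i) (LinearMap.lTensor (G.A i) G.counit
          ((TensorProduct.comm F (G.A 0) (G.A i)) (TensorProduct.map (G.star 0) (G.star i) t)))
        = G.star i (TensorProduct.lid F (G.A i) (LinearMap.rTensor (G.A i) G.counit t)) := by
    intro t
    induction t using TensorProduct.induction_on with
    | zero => simp
    | tmul a b => simp [hG.star_zero]
    | add u v hu hv => simp only [map_add, hu, hv]
  rw [hsc', key, hG.left_counit i (G.star i y), hG.star_invol]

end IsGNF
namespace IsGNF
open TensorProduct LinearMap
variable {F : Type} [Field F] {G : GNFData F} (hG : IsGNF G)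
include hG

theorem star_star (m n : ℕ) (u : G.A m ⊗[F] G.A n) :
    TensorProduct.map (G.star m) (G.star n) (TensorProduct.map (G.star m) (G.star n) u) = u := by
  induction u using TensorProduct.induction_on with
  | zero => simp
  | tmul a b => simp [hG.star_invol]
  | add u v hu hv => simp only [map_add, hu, hv]

theorem rfrob (i j : ℕ) (w : G.A 1) (x : G.A (i + j)) :
    G.comul i (j + 1) (G.mul (i + j) 1 x w)
      = LinearMap.lTensor (G.A i) ((G.mul j 1).flip w) (G.comul i j x) := by
  have hsm := hG.star_mul (i + j) 1 x w
  rw [hG.star_one] at hsm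
  have h1 : G.comul (j + 1) i
        (G.cast (show i + j + 1 = j + 1 + i by omega)
          (G.star (i + j + 1) (G.mul (i + j) 1 x w)))
      = (TensorProduct.comm F (G.A i) (G.A (j + 1)))
          (TensorProduct.map (G.star i) (G.star (j + 1))
            (G.comul i (j + 1) (G.mul (i + j) 1 x w))) :=
    hG.star_comul i (j + 1) (G.mul (i + j) 1 x w)
  rw [hsm, G.cast_cast] at h1
  have hmc : G.mul 1 (j + i) w (G.cast (Nat.add_comm i j) (G.star (i + j) x))
      = G.cast (show 1 + (i + j) = 1 + (j + i) by omega)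
          (G.mul 1 (i + j) w (G.star (i + j) x)) :=
    G.mul_cast_right (Nat.add_comm i j) _ w (G.star (i + j) x)
  have hmc' : G.mul 1 (i + j) w (G.star (i + j) x)
      = G.cast (show 1 + (j + i) = 1 + (i + j) by omega)
          (G.mul 1 (j + i) w (G.cast (Nat.add_comm i j) (G.star (i + j) x))) := by
    rw [hmc, G.cast_cast, G.cast_id]; rfl
  rw [hmc', G.cast_cast] at h1
  rw [← G.cast_cast (Nat.add_assoc 1 j i).symm
        (show (1 + j) + i = (j + 1) + i by omega)] at h1
  rw [G.comul_cast (Nat.add_comm 1 j) (rfl : i = i)] at h1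
  rw [hG.frobenius 1 j i w (G.cast (Nat.add_comm i j) (G.star (i + j) x))] at h1
  rw [hG.star_comul i j x] at h1
  have key : ∀ t : G.A i ⊗[F] G.A j,
      TensorProduct.map (G.star i) (G.star (j + 1))
          ((TensorProduct.comm F (G.A i) (G.A (j + 1))).symm
            (TensorProduct.map (G.cast (Nat.add_comm 1 j)) (G.cast (rfl : i = i))
              (LinearMap.rTensor (G.A i) (G.mulMap 1 j)
                ((TensorProduct.assoc F (G.A 1) (G.A j) (G.A i)).symm
                  (w ⊗ₜ[F] (TensorProduct.comm F (G.A i) (G.A j))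
                    (TensorProduct.map (G.star i) (G.star j) t))))))
        = LinearMap.lTensor (G.A i) ((G.mul j 1).flip w) t := by
    intro t
    induction t using TensorProduct.induction_on with
    | zero => simp
    | tmul a b =>
        simp only [TensorProduct.map_tmul, TensorProduct.comm_tmul, TensorProduct.tmul_zero,
          TensorProduct.assoc_symm_tmul, LinearMap.rTensor_tmul, TensorProduct.comm_symm_tmul,
          LinearMap.lTensor_tmul, LinearMap.flip_apply, GNFData.mulMap, TensorProduct.lift.tmul]
        simp only [G.star_cast, hG.star_mul, hG.star_one, hG.star_invol, G.cast_cast,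
          G.cast_id, LinearMap.id_coe, id_eq]
    | add u v hu hv =>
        simp only [map_add, TensorProduct.tmul_add, hu, hv]
  calc G.comul i (j + 1) (G.mul (i + j) 1 x w)
      = TensorProduct.map (G.star i) (G.star (j + 1))
          (TensorProduct.map (G.star i) (G.star (j + 1))
            (G.comul i (j + 1) (G.mul (i + j) 1 x w))) := (hG.star_star i (j+1) _).symm
    _ = TensorProduct.map (G.star i) (G.star (j + 1))
          ((TensorProduct.comm F (G.A i) (G.A (j + 1))).symm
            ((TensorProduct.comm F (G.A i) (G.A (j + 1)))
              (TensorProduct.map (G.star i) (G.star (j + 1))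
                (G.comul i (j + 1) (G.mul (i + j) 1 x w))))) := by
          rw [LinearEquiv.symm_apply_apply]
    _ = LinearMap.lTensor (G.A i) ((G.mul j 1).flip w) (G.comul i j x) := by
          rw [← h1]; exact key _

end IsGNF
namespace IsGNF
open TensorProduct LinearMap
variable {F : Type} [Field F] {G : GNFData F}

/-- bilinear computation: no axioms needed -/
theorem key2 (lam : G.A 1 →ₗ[F] F) (i j : ℕ) (x : G.A i) (t : G.A j ⊗[F] G.A 1) :
    TensorProduct.rid F (G.A (i + j)) (LinearMap.lTensor (G.A (i + j)) lam
        (LinearMap.rTensor (G.A 1) (G.mulMap i j)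
          ((TensorProduct.assoc F (G.A i) (G.A j) (G.A 1)).symm (x ⊗ₜ[F] t))))
      = G.mul i j x (TensorProduct.rid F (G.A j) (LinearMap.lTensor (G.A j) lam t)) := by
  induction t using TensorProduct.induction_on with
  | zero => simp
  | tmul b c =>
      simp [GNFData.mulMap, TensorProduct.lift.tmul, TensorProduct.smul_tmul']
  | add u v hu hv => simp only [TensorProduct.tmul_add, map_add, hu, hv]

theorem key5 (lam : G.A 1 →ₗ[F] F) (t : G.A 0 ⊗[F] G.A 1) :
    G.counit (TensorProduct.rid F (G.A 0) (LinearMap.lTensor (G.A 0) lam t))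
      = lam (TensorProduct.lid F (G.A 1) (LinearMap.rTensor (G.A 1) G.counit t)) := by
  induction t using TensorProduct.induction_on with
  | zero => simp
  | tmul a b => simp [mul_comm]
  | add u v hu hv => simp only [map_add, hu, hv]

variable (hG : IsGNF G)
include hG

theorem left_counit_one (x : G.A 1) :
    TensorProduct.lid F (G.A 1) (LinearMap.rTensor (G.A 1) G.counit (G.comul 0 1 x)) = x :=
  hG.left_counit 1 x

end IsGNF

namespace GNFData
open TensorProduct LinearMap
variable {F : Type} [Field F] (G : GNFData F)

/-- `α_i` built from a functional `lam`. -/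
noncomputable def alphaOf (lam : G.A 1 →ₗ[F] F) (i : ℕ) : G.A (i + 1) →ₗ[F] G.A i :=
  (TensorProduct.rid F (G.A i)).toLinearMap ∘ₗ LinearMap.lTensor (G.A i) lam ∘ₗ G.comul i 1

theorem alphaOf_apply (lam : G.A 1 →ₗ[F] F) (i : ℕ) (x : G.A (i + 1)) :
    G.alphaOf lam i x
      = TensorProduct.rid F (G.A i) (LinearMap.lTensor (G.A i) lam (G.comul i 1 x)) := rfl

end GNFData
open TensorProduct LinearMap in
/-- The modular splitting built from a pair `(w, lam)`. -/
noncomputable def IsGNF.fromPair {F : Type} [Field F] {G : GNFData F} (hG : IsGNF G)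
    (w : G.A 1) (lam : G.A 1 →ₗ[F] F)
    (hc : (TensorProduct.rid F (G.A 0))
        (LinearMap.lTensor (G.A 0) lam (G.comul 0 1 w)) = G.unit 1) :
    ModularSplitting G where
  omega i := (G.mul i 1).flip w
  alpha i := G.alphaOf lam i
  omega_module i j x y := by
    simp only [LinearMap.flip_apply]
    rw [hG.assoc i j 1 x y w, G.cast_id]; rfl
  alpha_module i j x y := by
    simp only [G.alphaOf_apply]
    have hf : G.comul (i + j) 1 (G.mul i (j + 1) x y)
        = LinearMap.rTensor (G.A 1) (G.mulMap i j)
            ((TensorProduct.assoc F (G.A i) (G.A j) (G.A 1)).symm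
              (x ⊗ₜ[F] G.comul j 1 y)) := by
      have h := hG.frobenius i j 1 x y
      rw [G.cast_id] at h
      exact h
    rw [hf]
    exact IsGNF.key2 lam i j x (G.comul j 1 y)
  omega_comodule i j x := hG.rfrob i j w x
  alpha_comodule i j x := by
    simp only [G.alphaOf_apply]
    have hco : LinearMap.lTensor (G.A i) (G.comul j 1) (G.comul i (j + 1) x)
        = (TensorProduct.assoc F (G.A i) (G.A j) (G.A 1))
            (LinearMap.rTensor (G.A 1) (G.comul i j) (G.comul (i + j) 1 x)) := by
      have h' : (TensorProduct.assoc F (G.A i) (G.A j) (G.A 1)).symm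
            (LinearMap.lTensor (G.A i) (G.comul j 1) (G.comul i (j + 1) x))
          = LinearMap.rTensor (G.A 1) (G.comul i j) (G.comul (i + j) 1 x) :=
        hG.coassoc i j 1 x
      rw [← h', LinearEquiv.apply_symm_apply]
    have key3 : ∀ t : G.A (i + j) ⊗[F] G.A 1,
        G.comul i j (TensorProduct.rid F (G.A (i + j))
            (LinearMap.lTensor (G.A (i + j)) lam t))
          = LinearMap.lTensor (G.A i)
              ((TensorProduct.rid F (G.A j)).toLinearMap ∘ₗ LinearMap.lTensor (G.A j) lam)
              ((TensorProduct.assoc F (G.A i) (G.A j) (G.A 1))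
                (LinearMap.rTensor (G.A 1) (G.comul i j) t)) := by
      intro t
      induction t using TensorProduct.induction_on with
      | zero => simp
      | tmul u c =>
          have sub : ∀ v : G.A i ⊗[F] G.A j,
              LinearMap.lTensor (G.A i)
                  ((TensorProduct.rid F (G.A j)).toLinearMap ∘ₗ LinearMap.lTensor (G.A j) lam)
                  ((TensorProduct.assoc F (G.A i) (G.A j) (G.A 1)) (v ⊗ₜ[F] c))
                = lam c • v := by
            intro v
            induction v using TensorProduct.induction_on with
            | zero => simp
            | tmul a b => simp [TensorProduct.smul_tmul']
            | add u' v' hu hv => simp only [TensorProduct.add_tmul, map_add, hu, hv,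
                smul_add]
          simp only [LinearMap.rTensor_tmul, LinearMap.lTensor_tmul, sub,
            TensorProduct.rid_tmul, map_smul]
      | add u v hu hv => simp only [map_add, hu, hv]
    rw [key3 (G.comul (i + j) 1 x), ← hco]
    rw [← LinearMap.comp_apply, ← LinearMap.lTensor_comp]
    rfl
  alpha_omega i x := by
    simp only [LinearMap.flip_apply, G.alphaOf_apply]
    have hf : G.comul i 1 (G.mul i 1 x w)
        = LinearMap.rTensor (G.A 1) (G.mulMap i 0)
            ((TensorProduct.assoc F (G.A i) (G.A 0) (G.A 1)).symm
              (x ⊗ₜ[F] G.comul 0 1 w)) := by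
      have h := hG.frobenius i 0 1 x w
      rw [G.cast_id] at h
      exact h
    rw [hf]
    have := IsGNF.key2 lam i 0 x (G.comul 0 1 w)
    rw [hc] at this
    exact this.trans (hG.right_unit i x)
theorem ModularSplitting.ext' {F : Type} [Field F] {G : GNFData F}
    {s t : ModularSplitting G} (h1 : s.omega = t.omega) (h2 : s.alpha = t.alpha) :
    s = t := by
  cases s; cases t; cases h1; cases h2; rfl

namespace IsGNF
open TensorProduct LinearMap
variable {F : Type} [Field F] {G : GNFData F} (hG : IsGNF G)
include hG

theorem omega_eq (s : ModularSplitting G) (i : ℕ) (x : G.A i) :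
    s.omega i x = G.mul i 1 x (s.omega 0 (G.unit 1)) := by
  have h := s.omega_module i 0 x (G.unit 1)
  rw [hG.right_unit i x] at h
  exact h

theorem alpha_eq (s : ModularSplitting G) (i : ℕ) (x : G.A (i + 1)) :
    s.alpha i x = TensorProduct.rid F (G.A i)
      (LinearMap.lTensor (G.A i) (G.counit ∘ₗ s.alpha 0) (G.comul i 1 x)) := by
  have h := s.alpha_comodule i 0 x
  rw [LinearMap.lTensor_comp, LinearMap.comp_apply, ← h]
  exact (hG.right_counit i (s.alpha (i + 0) x)).symm

theorem splitting_constraint (s : ModularSplitting G) :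
    TensorProduct.rid F (G.A 0)
      (LinearMap.lTensor (G.A 0) (G.counit ∘ₗ s.alpha 0)
        (G.comul 0 1 (s.omega 0 (G.unit 1)))) = G.unit 1 := by
  have h := s.omega_comodule 0 0 (G.unit 1)
  have hcomp : (G.counit ∘ₗ s.alpha 0) ∘ₗ s.omega 0 = G.counit :=
    LinearMap.ext fun x => by
      simp only [LinearMap.comp_apply, s.alpha_omega]
  rw [h, ← LinearMap.comp_apply, ← LinearMap.lTensor_comp, hcomp]
  exact hG.right_counit 0 (G.unit 1)

end IsGNF
/-- Modular splittings `(α, ω)` of a GNF*-algebra biject with pairs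
`(w, λ) ∈ A₁ × A₁*` with `(Id ⊗ λ)(δ_{0,1}(w)) = 1`; the forward map is
`w = ω₀(1)`, `λ = τ ∘ α₁`, and the inverse is `ω_i(x) = μ_{i,1}(x ⊗ w)`,
`α_i = (Id ⊗ λ) ∘ δ_{i−1,1}`. -/
theorem GNF_modular_splitting_bijection (G : GNFData F) (hG : IsGNF G) :
    ∃ e : ModularSplitting G ≃
        {p : G.A 1 × (G.A 1 →ₗ[F] F) //
          (TensorProduct.rid F (G.A 0))
            (LinearMap.lTensor (G.A 0) p.2 (G.comul 0 1 p.1)) = G.unit 1},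
      (∀ s : ModularSplitting G,
          (e s).val.1 = s.omega 0 (G.unit 1) ∧ (e s).val.2 = G.counit ∘ₗ s.alpha 0)
      ∧ (∀ p, (∀ (i : ℕ) (x : G.A i), (e.symm p).omega i x = G.mul i 1 x p.val.1)
          ∧ (∀ (i : ℕ) (x : G.A (i + 1)),
              (e.symm p).alpha i x = (TensorProduct.rid F (G.A i))
                (LinearMap.lTensor (G.A i) p.val.2 (G.comul i 1 x)))) := by
  refine ⟨{ toFun := fun s => ⟨(s.omega 0 (G.unit 1), G.counit ∘ₗ s.alpha 0),
              hG.splitting_constraint s⟩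
            invFun := fun p => hG.fromPair p.1.1 p.1.2 p.2
            left_inv := ?_
            right_inv := ?_ }, fun s => ⟨rfl, rfl⟩, fun p => ⟨fun i x => rfl, fun i x => rfl⟩⟩
  · intro s
    refine ModularSplitting.ext' ?_ ?_
    · funext i
      exact LinearMap.ext fun x => (hG.omega_eq s i x).symm
    · funext i
      exact LinearMap.ext fun x => (hG.alpha_eq s i x).symm
  · intro p
    refine Subtype.ext (Prod.ext ?_ ?_)
    · show G.mul 0 1 (G.unit 1) p.1.1 = p.1.1
      rw [hG.left_unit, G.cast_id]; rfl
    · refine LinearMap.ext fun x => ?_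
      exact (IsGNF.key5 p.1.2 (G.comul 0 1 x)).trans
        (congrArg p.1.2 (hG.left_counit_one x))
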